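/- Let A and B be n×n Hermitian positive semidefinite complex matrices, and let a_1 ≥ a_2 ≥ … ≥ a_n and b_1 ≥ b_2 ≥ … ≥ b_n be their respective eigenvalues (given by the spectral theorem) arranged in nonincreasing order. Then the determinant det(I + A·B) is a real number and (det(I + A·B)).re ≤ ∏_{i=1}^{n} (1 + a_i·b_i). -/

import Mathlib

/-!
Let `Q` be a Hermitian square root of `A`. Then `det (1 + A * B) = det (1 + Q * B * Q)`, and
`Q * B * Q` is positive semidefinite, so the determinant is the real number `∏ (1 + μ i)`, where
`μ` are the eigenvalues of `Q * B * Q` in nonincreasing order.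

If the columns of `V` are eigenvectors of `Q * B * Q` for `μ 0, …, μ (m - 1)`, then
`∏_{i<m} μ i = det (Vᴴ * Q * B * Q * V) ≤ (∏_{i<m} b i) * det (Vᴴ * A * V) ≤ ∏_{i<m} a i * b i`.
Both steps are instances of `det (Wᴴ * M * W) ≤ (product of the m largest eigenvalues of M) *
det (Wᴴ * W)`, which follows from the Cauchy–Binet formula after diagonalizing `M`.

So the prefix products of `μ` are dominated by those of `a * b`. Since `t ↦ log (1 + exp t)` is
convex, its tangent lines at `log (μ i)` together with Abel summation (the slopes
`μ i / (1 + μ i)` decrease) give `∑ log (1 + μ i) ≤ ∑ log (1 + a i * b i)`.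
-/

open Matrix ComplexOrder Finset

theorem Function.Injective.exists_perm_comp_eq_of_range_eq {α β : Type*} {f g : α → β}
    (hf : f.Injective) (hg : g.Injective) (h : Set.range f = Set.range g) :
    ∃ σ : Equiv.Perm α, f ∘ σ = g :=
  ⟨(Equiv.ofInjective g hg).trans ((Equiv.setCongr h.symm).trans (Equiv.ofInjective f hf).symm),
    funext fun i => by simp [Equiv.apply_ofInjective_symm]⟩

theorem Finset.prod_orderEmbOfFin {α M : Type*} [LinearOrder α] [CommMonoid M] (s : Finset α)
    {k : ℕ} (h : s.card = k) (f : α → M) :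
    ∏ i, f (s.orderEmbOfFin h i) = ∏ i ∈ s, f i := by
  conv_rhs => rw [← s.map_orderEmbOfFin_univ h, Finset.prod_map]
  rfl

theorem Fin.val_le_of_strictMono {k n : ℕ} {f : Fin k → Fin n} (hf : StrictMono f) (i : Fin k) :
    (i : ℕ) ≤ f i := by
  have := card_le_card_of_injOn f (fun j hj => by simpa using hf.monotone (by simpa using hj))
    hf.injective.injOn (s := Iic i) (t := Iic (f i))
  simpa using this

theorem Finset.prod_le_prod_castLE_of_antitone {R : Type*} [CommSemiring R] [PartialOrder R]
    [IsOrderedRing R] {n k : ℕ} {a : Fin n → R} (ha : Antitone a) (ha0 : 0 ≤ a)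
    {T : Finset (Fin n)} (hT : T.card = k) (hk : k ≤ n) :
    ∏ j ∈ T, a j ≤ ∏ i : Fin k, a (Fin.castLE hk i) := by
  rw [← T.prod_orderEmbOfFin hT]
  exact prod_le_prod (fun i _ => ha0 _) fun i _ =>
    ha (Fin.le_def.2 (Fin.val_le_of_strictMono (T.orderEmbOfFin hT).strictMono i))

theorem Fin.mul_sum_le_sum_mul_of_antitone {n : ℕ} {c d : Fin n → ℝ} (hc : Antitone c) {γ : ℝ}
    (hγ : 0 ≤ γ) (hγc : ∀ i, γ ≤ c i)
    (hd : ∀ m (hm : m ≤ n), 0 ≤ ∑ i : Fin m, d (Fin.castLE hm i)) :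
    γ * ∑ i, d i ≤ ∑ i, c i * d i := by
  induction n generalizing γ with
  | zero => simp
  | succ n ih =>
    rw [Fin.sum_univ_castSucc, Fin.sum_univ_castSucc]
    have hinit : c (Fin.last n) * ∑ i : Fin n, d i.castSucc ≤
        ∑ i : Fin n, c i.castSucc * d i.castSucc :=
      ih (hc.comp_monotone Fin.strictMono_castSucc.monotone) (hγ.trans (hγc _))
        (fun i => hc (Fin.le_last _)) (fun m hm => hd m (hm.trans n.le_succ))
    have hsum : 0 ≤ ∑ i : Fin n, d i.castSucc + d (Fin.last n) := by
      simpa [Fin.sum_univ_castSucc] using hd (n + 1) le_rfl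
    calc γ * (∑ i : Fin n, d i.castSucc + d (Fin.last n))
        ≤ c (Fin.last n) * (∑ i : Fin n, d i.castSucc + d (Fin.last n)) :=
          mul_le_mul_of_nonneg_right (hγc _) hsum
      _ ≤ _ := by linarith

/-- The tangent of the convex function `t ↦ log (1 + exp t)` at `log x`, evaluated at `log y`. -/
theorem Real.log_one_add_add_mul_log_sub_log_le {x y : ℝ} (hx : 0 < x) (hy : 0 < y) :
    log (1 + x) + x / (1 + x) * (log y - log x) ≤ log (1 + y) := by
  have key := strictConcaveOn_log_Ioi.concaveOn.2 (Set.mem_Ioi.2 one_pos)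
    (Set.mem_Ioi.2 (div_pos hy hx)) (by positivity : 0 ≤ 1 / (1 + x))
    (by positivity : 0 ≤ x / (1 + x)) (by field_simp)
  have hmean : (1 / (1 + x)) • (1 : ℝ) + (x / (1 + x)) • (y / x) = (1 + y) / (1 + x) := by
    simp only [smul_eq_mul]; field_simp
  rw [hmean, smul_eq_mul, smul_eq_mul, log_one, mul_zero, zero_add, log_div hy.ne' hx.ne',
    log_div (by positivity) (by positivity)] at key
  linarith

section PrefixProducts

variable {n : ℕ} {x y : Fin n → ℝ}

theorem Fin.prod_one_add_le_prod_one_add_of_prefix_prod_le_of_pos (hx : Antitone x)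
    (hx0 : ∀ i, 0 < x i) (hy0 : 0 ≤ y)
    (h : ∀ m (hm : m ≤ n), ∏ i : Fin m, x (Fin.castLE hm i) ≤ ∏ i : Fin m, y (Fin.castLE hm i)) :
    ∏ i, (1 + x i) ≤ ∏ i, (1 + y i) := by
  have hy : ∀ i, 0 < y i := by
    refine fun i => (hy0 i).lt_of_ne' fun hyi => ?_
    have hle := h (i + 1) i.2
    have hzero : ∏ j : Fin (i + 1), y (Fin.castLE i.2 j) = 0 :=
      prod_eq_zero (mem_univ (Fin.last i)) hyi
    rw [hzero] at hle
    exact hle.not_gt (prod_pos fun j _ => hx0 _)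
  have hx1 : ∀ i, 0 < 1 + x i := fun i => by linarith [hx0 i]
  have hy1 : ∀ i, 0 < 1 + y i := fun i => by linarith [hy i]
  have hslope : Antitone fun i => x i / (1 + x i) := fun i j hij => by
    have := hx hij
    have := hx0 j
    rw [div_le_div_iff₀ (hx1 j) (hx1 i)]
    nlinarith
  have habel : 0 ≤ ∑ i, x i / (1 + x i) * (Real.log (y i) - Real.log (x i)) := by
    refine (zero_mul _).symm.le.trans (Fin.mul_sum_le_sum_mul_of_antitone hslope le_rfl
      (fun i => (div_pos (hx0 i) (hx1 i)).le) fun m hm => ?_)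
    rw [sum_sub_distrib, ← Real.log_prod fun i _ => (hy _).ne',
      ← Real.log_prod fun i _ => (hx0 _).ne', sub_nonneg]
    exact Real.log_le_log (prod_pos fun i _ => hx0 _) (h m hm)
  rw [← Real.log_le_log_iff (prod_pos fun i _ => hx1 i) (prod_pos fun i _ => hy1 i),
    Real.log_prod fun i _ => (hx1 i).ne', Real.log_prod fun i _ => (hy1 i).ne']
  calc ∑ i, Real.log (1 + x i)
      ≤ ∑ i, (Real.log (1 + x i) + x i / (1 + x i) * (Real.log (y i) - Real.log (x i))) := by
        rw [sum_add_distrib]; linarith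
    _ ≤ ∑ i, Real.log (1 + y i) :=
        sum_le_sum fun i _ => Real.log_one_add_add_mul_log_sub_log_le (hx0 i) (hy i)

theorem Fin.prod_one_add_le_prod_one_add_of_prefix_prod_le (hx : Antitone x) (hx0 : 0 ≤ x)
    (hy0 : 0 ≤ y)
    (h : ∀ m (hm : m ≤ n), ∏ i : Fin m, x (Fin.castLE hm i) ≤ ∏ i : Fin m, y (Fin.castLE hm i)) :
    ∏ i, (1 + x i) ≤ ∏ i, (1 + y i) := by
  induction n with
  | zero => simp
  | succ n ih =>
    rcases (show 0 ≤ x (Fin.last n) from hx0 _).lt_or_eq with hlast | hlast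
    · exact Fin.prod_one_add_le_prod_one_add_of_prefix_prod_le_of_pos hx
        (fun i => hlast.trans_le (hx (Fin.le_last i))) hy0 h
    · rw [Fin.prod_univ_castSucc, Fin.prod_univ_castSucc, ← hlast, add_zero, mul_one]
      have hinit := ih (y := y ∘ Fin.castSucc) (hx.comp_monotone Fin.strictMono_castSucc.monotone)
        (fun i => hx0 _) (fun i => hy0 _) fun m hm => h m (hm.trans n.le_succ)
      exact hinit.trans (le_mul_of_one_le_right
        (prod_nonneg fun i _ => add_nonneg zero_le_one (hy0 _)) (le_add_of_nonneg_right (hy0 _)))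

end PrefixProducts

namespace Matrix

variable {R ι : Type*} [CommRing R] {k : ℕ}

theorem sum_perm_prod_mul_det_submatrix (A : Matrix (Fin k) ι R) (B : Matrix ι (Fin k) R)
    (e : Fin k → ι) :
    ∑ σ : Equiv.Perm (Fin k), (∏ i, A i (e (σ i))) * (B.submatrix (e ∘ σ) id).det =
      (A.submatrix id e).det * (B.submatrix e id).det := by
  rw [← det_transpose (A.submatrix id e), det_apply', Finset.sum_mul]
  refine Finset.sum_congr rfl fun σ _ => ?_
  rw [show B.submatrix (e ∘ σ) id = (B.submatrix e id).submatrix σ id from rfl, det_permute]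
  simp only [transpose_apply, submatrix_apply, id_eq]
  ring

variable [Fintype ι]

theorem det_mul_eq_sum_prod_mul_det_submatrix (A : Matrix (Fin k) ι R) (B : Matrix ι (Fin k) R) :
    (A * B).det = ∑ f : Fin k → ι, (∏ i, A i (f i)) * (B.submatrix f id).det := by
  let D : (Fin k → R) [⋀^Fin k]→ₗ[R] R := detRowAlternating
  have hrows : (A * B).det = D fun i => ∑ j, A i j • B j :=
    congrArg D (by ext i j; simp [mul_apply, Finset.sum_apply])
  rw [hrows, ← D.coe_multilinearMap, D.toMultilinearMap.map_sum]
  refine Finset.sum_congr rfl fun f _ => ?_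
  rw [D.toMultilinearMap.map_smul_univ, smul_eq_mul]
  rfl

/-- The Cauchy–Binet formula. -/
theorem det_mul_eq_sum_det_submatrix_mul_det_submatrix [LinearOrder ι]
    (A : Matrix (Fin k) ι R) (B : Matrix ι (Fin k) R) :
    (A * B).det = ∑ S : {S : Finset ι // S.card = k},
      (A.submatrix id (S.1.orderEmbOfFin S.2)).det *
        (B.submatrix (S.1.orderEmbOfFin S.2) id).det := by
  simp_rw [← sum_perm_prod_mul_det_submatrix, ← Fintype.sum_prod_type']
  rw [det_mul_eq_sum_prod_mul_det_submatrix]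
  symm
  refine Finset.sum_bij_ne_zero (fun p _ _ => p.1.1.orderEmbOfFin p.1.2 ∘ p.2) (by simp)
    ?_ ?_ (fun _ _ _ => rfl)
  · rintro ⟨⟨S, hS⟩, σ⟩ - - ⟨⟨T, hT⟩, τ⟩ - - h
    have hST : S = T := by
      have hrange := congrArg Set.range h
      simp only [EquivLike.range_comp, range_orderEmbOfFin] at hrange
      exact_mod_cast hrange
    subst hST
    simpa [Equiv.ext_iff, funext_iff] using h
  · intro f _ hf
    have hinj : f.Injective := by
      intro i j hij
      by_contra hne
      exact hf (by rw [det_zero_of_row_eq hne (by ext; simp [hij]), mul_zero])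
    have hcard : (univ.image f).card = k := by simp [card_image_of_injective _ hinj]
    obtain ⟨σ, hσ⟩ := ((univ.image f).orderEmbOfFin hcard).injective.exists_perm_comp_eq_of_range_eq
      hinj (by simp)
    exact ⟨(⟨_, hcard⟩, σ), mem_univ _, by rwa [← hσ] at hf, hσ⟩

variable {𝕜 : Type*} [RCLike 𝕜]

theorem det_conjTranspose_mul_diagonal_mul [LinearOrder ι] (M : Matrix ι (Fin k) 𝕜) (d : ι → ℝ) :
    (Mᴴ * diagonal (fun i => (d i : 𝕜)) * M).det =
      ((∑ S : {S : Finset ι // S.card = k},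
        (∏ i ∈ S.1, d i) * ‖(M.submatrix (S.1.orderEmbOfFin S.2) id).det‖ ^ 2 : ℝ) : 𝕜) := by
  rw [Matrix.mul_assoc, det_mul_eq_sum_det_submatrix_mul_det_submatrix]
  push_cast
  refine Finset.sum_congr rfl fun ⟨S, hS⟩ _ => ?_
  have hdiag : (diagonal (fun i => (d i : 𝕜)) * M).submatrix (S.orderEmbOfFin hS) id =
      diagonal (fun i => (d (S.orderEmbOfFin hS i) : 𝕜)) * M.submatrix (S.orderEmbOfFin hS) id := by
    ext i j
    simp [diagonal_mul]
  rw [← conjTranspose_submatrix, hdiag, det_conjTranspose, det_mul, det_diagonal,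
    S.prod_orderEmbOfFin hS fun i => (d i : 𝕜), ← RCLike.conj_mul, RCLike.star_def]
  ring

theorem PosSemidef.re_det_conjTranspose_mul_mul_le [LinearOrder ι] {B : Matrix ι ι 𝕜}
    (hB : B.PosSemidef) {c : ℝ} (hc : ∀ T : Finset ι, T.card = k → ∏ j ∈ T, hB.1.eigenvalues j ≤ c)
    (W : Matrix ι (Fin k) 𝕜) :
    RCLike.re (Wᴴ * B * W).det ≤ c * RCLike.re (Wᴴ * W).det := by
  let U : Matrix ι ι 𝕜 := hB.1.eigenvectorUnitary
  have hUU : U * star U = 1 := Unitary.mul_star_self_of_mem hB.1.eigenvectorUnitary.2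
  let M : Matrix ι (Fin k) 𝕜 := star U * W
  have hMH : Mᴴ = Wᴴ * U := by
    rw [conjTranspose_mul, star_eq_conjTranspose, conjTranspose_conjTranspose]
  have hBW : Wᴴ * B * W = Mᴴ * diagonal (fun i => (hB.1.eigenvalues i : 𝕜)) * M := by
    conv_lhs => rw [hB.1.spectral_theorem]
    simp [hMH, M, U, Matrix.mul_assoc, Function.comp_def]
  have hWW : Wᴴ * W = Mᴴ * diagonal (fun _ : ι => ((1 : ℝ) : 𝕜)) * M := by
    rw [hMH, RCLike.ofReal_one, diagonal_one, Matrix.mul_one, Matrix.mul_assoc,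
      ← Matrix.mul_assoc U, hUU, Matrix.one_mul]
  rw [hBW, hWW, det_conjTranspose_mul_diagonal_mul, det_conjTranspose_mul_diagonal_mul,
    RCLike.ofReal_re, RCLike.ofReal_re, Finset.mul_sum]
  refine Finset.sum_le_sum fun S _ => ?_
  rw [Finset.prod_const_one, one_mul]
  exact mul_le_mul_of_nonneg_right (hc S.1 S.2) (by positivity)

theorem IsHermitian.det_one_add [DecidableEq ι] {C : Matrix ι ι 𝕜} (hC : C.IsHermitian) :
    (1 + C).det = ∏ i, (1 + (hC.eigenvalues i : 𝕜)) := by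
  conv_lhs => rw [hC.spectral_theorem, ← map_one (Unitary.conjStarAlgAut 𝕜 _ hC.eigenvectorUnitary),
    ← map_add]
  simp only [← diagonal_one, diagonal_add, Function.comp_apply, det_map, det_diagonal]

theorem conjTranspose_submatrix_mul_mul_submatrix {κ : Type*} (U M : Matrix ι ι 𝕜)
    (q : κ → ι) : (U.submatrix id q)ᴴ * M * U.submatrix id q = (Uᴴ * M * U).submatrix q q := by
  ext i j
  simp only [mul_apply, submatrix_apply, conjTranspose_apply, id_eq, sum_mul]

open scoped MatrixOrder in
theorem PosSemidef.exists_isHermitian_mul_self_eq [DecidableEq ι] {A : Matrix ι ι 𝕜}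
    (hA : A.PosSemidef) : ∃ Q : Matrix ι ι 𝕜, Q.IsHermitian ∧ Q * Q = A :=
  ⟨CFC.sqrt A, (CFC.sqrt_nonneg A).posSemidef.1, CFC.sqrt_mul_sqrt_self A hA.nonneg⟩

section Fin

variable {n m : ℕ} {A B Q : Matrix (Fin n) (Fin n) 𝕜} {a b : Fin n → ℝ}

theorem PosSemidef.prod_eigenvalues_le_prod_castLE (hB : B.PosSemidef) (hb : Antitone b)
    {τ : Equiv.Perm (Fin n)} (hτ : b = hB.1.eigenvalues ∘ τ) (hm : m ≤ n) {T : Finset (Fin n)}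
    (hT : T.card = m) : ∏ j ∈ T, hB.1.eigenvalues j ≤ ∏ i : Fin m, b (Fin.castLE hm i) := by
  calc ∏ j ∈ T, hB.1.eigenvalues j = ∏ j ∈ T.map τ.symm.toEmbedding, b j := by simp [hτ, prod_map]
    _ ≤ _ := prod_le_prod_castLE_of_antitone hb (fun i => hτ ▸ hB.eigenvalues_nonneg _)
      (by simpa using hT) hm

theorem PosSemidef.prod_eigenvalues_mul_mul_le (hA : A.PosSemidef) (hB : B.PosSemidef)
    (ha : Antitone a) {σ : Equiv.Perm (Fin n)} (hσ : a = hA.1.eigenvalues ∘ σ)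
    (hb : Antitone b) {τ : Equiv.Perm (Fin n)} (hτ : b = hB.1.eigenvalues ∘ τ)
    (hQ : Q.IsHermitian) (hQA : Q * Q = A) (hC : (Q * B * Q).IsHermitian) (hm : m ≤ n)
    {q : Fin m → Fin n} (hq : q.Injective) :
    ∏ i, hC.eigenvalues (q i) ≤
      (∏ i : Fin m, a (Fin.castLE hm i)) * ∏ i : Fin m, b (Fin.castLE hm i) := by
  set U : Matrix (Fin n) (Fin n) 𝕜 := (hC.eigenvectorUnitary : Matrix (Fin n) (Fin n) 𝕜)
  set V := U.submatrix id q
  have hUU : star U * U = 1 := Unitary.star_mul_self_of_mem hC.eigenvectorUnitary.2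
  have hdiag := hC.conjStarAlgAut_star_eigenvectorUnitary
  rw [Unitary.conjStarAlgAut_star_apply] at hdiag
  have hVV : Vᴴ * V = 1 := by
    have := conjTranspose_submatrix_mul_mul_submatrix U 1 q
    rwa [Matrix.mul_one, Matrix.mul_one, ← star_eq_conjTranspose, hUU, submatrix_one _ hq] at this
  have hVCV : Vᴴ * (Q * B * Q) * V = diagonal fun i => (hC.eigenvalues (q i) : 𝕜) := by
    rw [conjTranspose_submatrix_mul_mul_submatrix, ← star_eq_conjTranspose, hdiag,
      submatrix_diagonal _ _ hq]
    rfl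
  calc ∏ i, hC.eigenvalues (q i) = RCLike.re (Vᴴ * (Q * B * Q) * V).det := by
        rw [hVCV, det_diagonal, ← RCLike.ofReal_prod, RCLike.ofReal_re]
    _ = RCLike.re ((Q * V)ᴴ * B * (Q * V)).det := by
        rw [conjTranspose_mul, hQ.eq]; simp only [Matrix.mul_assoc]
    _ ≤ (∏ i : Fin m, b (Fin.castLE hm i)) * RCLike.re ((Q * V)ᴴ * (Q * V)).det :=
        hB.re_det_conjTranspose_mul_mul_le
          (fun T hT => hB.prod_eigenvalues_le_prod_castLE hb hτ hm hT) _
    _ = (∏ i : Fin m, b (Fin.castLE hm i)) * RCLike.re (Vᴴ * A * V).det := by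
        rw [conjTranspose_mul, hQ.eq, ← hQA]; simp only [Matrix.mul_assoc]
    _ ≤ (∏ i : Fin m, b (Fin.castLE hm i)) *
          ((∏ i : Fin m, a (Fin.castLE hm i)) * RCLike.re (Vᴴ * V).det) := by
        gcongr
        · exact prod_nonneg fun i _ => hτ ▸ hB.eigenvalues_nonneg _
        · exact hA.re_det_conjTranspose_mul_mul_le
            (fun T hT => hA.prod_eigenvalues_le_prod_castLE ha hσ hm hT) _
    _ = _ := by rw [hVV, det_one, RCLike.one_re, mul_one, mul_comm]

end Fin

end Matrix

/-- (Theorem H.1.h of Marshall–Olkin.) Let `A` and `B` be `n × n`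
Hermitian positive semidefinite complex matrices and let `a` and `b` be their
respective eigenvalues (given by the spectral theorem) arranged in nonincreasing
order. Then `det (I + A * B)` is a real number and
`(det (I + A * B)).re ≤ ∏ i, (1 + a i * b i)`. -/
theorem det_one_add_mul_le_prod_ordered_eigenvalues
    (n : ℕ) (A B : Matrix (Fin n) (Fin n) ℂ)
    (hA : A.PosSemidef) (hB : B.PosSemidef)
    (a b : Fin n → ℝ) (ha : Antitone a) (hb : Antitone b)
    (σ : Equiv.Perm (Fin n)) (hσ : a = hA.1.eigenvalues ∘ σ)
    (τ : Equiv.Perm (Fin n)) (hτ : b = hB.1.eigenvalues ∘ τ) :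
    ((1 + A * B).det).im = 0 ∧
    ((1 + A * B).det).re ≤ ∏ i : Fin n, (1 + a i * b i) := by
  obtain ⟨Q, hQ, hQA⟩ := hA.exists_isHermitian_mul_self_eq
  have hC : (Q * B * Q).PosSemidef := by
    simpa only [hQ.eq] using hB.mul_mul_conjTranspose_same Q
  set ν := hC.1.eigenvalues
  have hdet : (1 + A * B).det = ((∏ i, (1 + ν i) : ℝ) : ℂ) := by
    rw [← hQA, Matrix.mul_assoc, det_one_add_mul_comm, hC.1.det_one_add]
    push_cast
    rfl
  let ρ : Equiv.Perm (Fin n) := Fin.revPerm.trans (Tuple.sort ν)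
  have hμ : Antitone (ν ∘ ρ) := fun i j hij => Tuple.monotone_sort ν (Fin.rev_le_rev.2 hij)
  rw [hdet, Complex.ofReal_im, Complex.ofReal_re, ← Equiv.prod_comp ρ]
  refine ⟨rfl, Fin.prod_one_add_le_prod_one_add_of_prefix_prod_le hμ
    (fun i => hC.eigenvalues_nonneg _)
    (fun i => mul_nonneg (hσ ▸ hA.eigenvalues_nonneg _) (hτ ▸ hB.eigenvalues_nonneg _))
    fun m hm => ?_⟩
  rw [prod_mul_distrib]
  exact hA.prod_eigenvalues_mul_mul_le hB ha hσ hb hτ hQ hQA hC.1 hm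
    (ρ.injective.comp (Fin.castLE_injective hm))
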